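/- Let A = A_1 0 ... 0 A_n ∈ W_ω^N with A_1,...,A_n ∈ S_1 and n ≥ 1. Then the lexicographically maximal subsequence of the sequence (A_1, ..., A_{n-1}, A_n 2) has the form (A_1, ..., A_k, A_n 2) for some k with 0 ≤ k ≤ n-1; moreover A_n 2 ≾ A_i for all i ≤ k and A_i ≺ A_n 2 for all i with k+1 ≤ i ≤ n-1. -/

import Mathlib

open scoped Classical

/-- Words: finite strings over the alphabet of natural numbers. -/
abbrev Word := List ℕ

/-- Lexicographic "not greater" comparison of finite sequences of words,
where entries are compared with the preorder `r`. -/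
def LexLe (r : Word → Word → Prop) (xs ys : List Word) : Prop :=
  (xs.length ≤ ys.length ∧ ∀ i < xs.length,
      r (xs.getD i []) (ys.getD i []) ∧ r (ys.getD i []) (xs.getD i []))
  ∨ ∃ s, s < xs.length ∧ s < ys.length ∧
      (∀ i < s, r (xs.getD i []) (ys.getD i []) ∧ r (ys.getD i []) (xs.getD i [])) ∧
      r (xs.getD s []) (ys.getD s []) ∧ ¬ r (ys.getD s []) (xs.getD s [])

/-- `M` is a lexicographically maximal subsequence of `xs` (w.r.t. entry preorder `r`). -/
def IsLexMax (r : Word → Word → Prop) (xs M : List Word) : Prop :=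
  M.Sublist xs ∧ ∀ N : List Word, N.Sublist xs → LexLe r N M

/-- Fuelled version of the recursively defined preorder `≾` on words:
`Λ ≾ Λ`; and if `n` is the minimal symbol of `A ++ B`, split `A` and `B` into
blocks at `n` and compare the lexicographically maximal subsequences of blocks. -/
def leAux : ℕ → Word → Word → Prop
  | 0, A, B => A = [] ∧ B = []
  | (fuel+1), A, B =>
      (A = [] ∧ B = []) ∨
      (∀ m, (A ++ B).min? = some m →
        ∀ MA MB : List Word, IsLexMax (leAux fuel) (A.splitOn m) MA →
          IsLexMax (leAux fuel) (B.splitOn m) MB →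
          LexLe (leAux fuel) MA MB)

/-- The preorder `≾` on words (the fuel `|A|+|B|+1` suffices for the recursion). -/
def Wle (A B : Word) : Prop := leAux (A.length + B.length + 1) A B

/-- The equivalence `∼`: `A ≾ B` and `B ≾ A`. -/
def Wequiv (A B : Word) : Prop := Wle A B ∧ Wle B A

/-- The strict relation `≺`: `A ≾ B` and not `B ≾ A`. -/
def Wlt (A B : Word) : Prop := Wle A B ∧ ¬ Wle B A

/-- Fuelled version of the normal form predicate `NF`. -/
def NFAux : ℕ → Word → Prop
  | 0, A => A = []
  | (fuel+1), A => A = [] ∨ ∀ m, A.min? = some m →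
      (A.splitOn m).Chain' (fun x y => Wle y x) ∧ ∀ b ∈ A.splitOn m, NFAux fuel b

/-- `A` is in normal form. -/
def InNF (A : Word) : Prop := NFAux A.length A

/-- `◇ₖ A`: the normal form of the word `A` with symbol `k` appended. -/
noncomputable def diamond (k : ℕ) (A : Word) : Word :=
  if h : ∃ B, InNF B ∧ Wequiv B (A ++ [k]) then h.choose else []

/-- Fuelled version of the ordinal value functions `o_n` on normal-form words in `S_n`. -/
noncomputable def oAux : ℕ → ℕ → Word → Ordinal
  | 0, _, _ => 0
  | (fuel+1), n, A =>
      if A.all (· = n) then (A.length : Ordinal)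
      else ((A.splitOn n).map (fun b => Ordinal.omega0 ^ oAux fuel (n+1) b)).foldr (· + ·) 0

/-- The ordinal value function `o_n : NF ∩ S_n → Ordinals`. -/
noncomputable def oW (n : ℕ) (A : Word) : Ordinal :=
  oAux (A.foldr max 0 + A.length + 1) n A

/-- The towers of `ω`-exponentiations: `ω_0 = 1`, `ω_{n+1} = ω ^ ω_n`. -/
noncomputable def omegaTower : ℕ → Ordinal
  | 0 => 1
  | (n+1) => Ordinal.omega0 ^ omegaTower n

/-- `ε₀`, the supremum of the `ω`-towers. -/
noncomputable def eps0 : Ordinal := ⨆ n : ℕ, omegaTower n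

/-- The function `ψ` on ordinals: `ψ 0 = ω`, and for `α > 0` with Cantor normal form
`ω^{α_1}+⋯+ω^{α_n}` (non-increasing exponents), `ψ α = ω^{α_1}+⋯+ω^{α_{n-1}}+ω^{α_n+1}`. -/
noncomputable def psi (α : Ordinal) : Ordinal :=
  match (Ordinal.CNF Ordinal.omega0 α).getLast? with
  | none => Ordinal.omega0
  | some p =>
      ((Ordinal.CNF Ordinal.omega0 α).dropLast).foldr
        (fun q r => Ordinal.omega0 ^ q.1 * q.2 + r) 0
      + (Ordinal.omega0 ^ p.1 * (p.2 - 1) + Ordinal.omega0 ^ (p.1 + 1))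

/-- The standard fundamental sequences `α[n]` for limit ordinals below `ε₀`
(junk values elsewhere). -/
noncomputable def fundSeq (α : Ordinal) (n : ℕ) : Ordinal :=
  match (Ordinal.CNF Ordinal.omega0 α).getLast? with
  | none => 0
  | some p =>
    let pre := ((Ordinal.CNF Ordinal.omega0 α).dropLast).foldr
        (fun q r => Ordinal.omega0 ^ q.1 * q.2 + r) 0
      + Ordinal.omega0 ^ p.1 * (p.2 - 1)
    if p.1 = 0 then 0
    else if h : ∃ e', p.1 = e' + 1 then
      pre + Ordinal.omega0 ^ h.choose * ((n : Ordinal) + 1)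
    else if hlt : p.1 < α then pre + Ordinal.omega0 ^ (fundSeq p.1 n) else 0
termination_by α
decreasing_by exact hlt

/-- The relation `R`: `α R β` iff `β = α + 1`, or `β` is a limit and `α = β[n]` for some `n`. -/
def Rrel (α β : Ordinal) : Prop :=
  β = α + 1 ∨ (Order.IsSuccLimit β ∧ ∃ n : ℕ, α = fundSeq β n)

/-! The blocks of `A_1 0 ⋯ 0 A_n` are cut at its minimal symbol `0`, so the normal form gives
`A_1 ≿ A_2 ≿ ⋯ ≿ A_n`. In a non-increasing sequence followed by a word `L`, the lexicographically
maximal subsequence takes the initial run of entries `≿ L` and then `L`, and all later entries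
are `≺ L`.

The real work is that `≾` is a total preorder. By strong induction on the total length of a
finite family of words: cutting all of them at their common minimal symbol gives strictly
shorter blocks, on which `≾` is a total preorder, hence so is the lexicographic order on
sequences of blocks, and comparing maximal subsequences of blocks is again total and
transitive. -/

open List

structure IsTotalPreorderOn {α : Type*} (r : α → α → Prop) (s : Set α) : Prop where
  total : ∀ x ∈ s, ∀ y ∈ s, r x y ∨ r y x
  trans : ∀ x ∈ s, ∀ y ∈ s, ∀ z ∈ s, r x y → r y z → r x z

namespace IsTotalPreorderOn

variable {α : Type*} {r : α → α → Prop} {s : Set α}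

lemma refl (hr : IsTotalPreorderOn r s) {x : α} (hx : x ∈ s) : r x x :=
  (hr.total x hx x hx).elim id id

lemma exists_top (hr : IsTotalPreorderOn r s) {l : List α} (hl : ∀ x ∈ l, x ∈ s)
    (hne : l ≠ []) : ∃ M ∈ l, ∀ N ∈ l, r N M := by
  induction l with
  | nil => contradiction
  | cons x t ih =>
    have hx : x ∈ s := hl x mem_cons_self
    rcases eq_or_ne t [] with rfl | ht
    · exact ⟨x, mem_singleton_self x, by simpa using hr.refl hx⟩
    obtain ⟨M, hM, hMtop⟩ := ih (fun y hy => hl y (mem_cons_of_mem x hy)) ht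
    have hMs : M ∈ s := hl M (mem_cons_of_mem x hM)
    rcases hr.total x hx M hMs with hxM | hMx
    · exact ⟨M, mem_cons_of_mem x hM, forall_mem_cons.2 ⟨hxM, hMtop⟩⟩
    · refine ⟨x, mem_cons_self, forall_mem_cons.2 ⟨hr.refl hx, fun N hN => ?_⟩⟩
      exact hr.trans N (hl N (mem_cons_of_mem x hN)) M hMs x hx (hMtop N hN) hMx

end IsTotalPreorderOn

section LexLe

variable {r r' : Word → Word → Prop} {x y : Word} {xs ys zs : List Word}

@[simp]
lemma lexLe_nil_left (ys : List Word) : LexLe r [] ys :=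
  Or.inl ⟨Nat.zero_le _, by simp⟩

@[simp]
lemma not_lexLe_cons_nil : ¬ LexLe r (x :: xs) [] := by
  rintro (⟨h, -⟩ | ⟨s, -, hs, -⟩) <;> simp at *

lemma lexLe_cons_cons : LexLe r (x :: xs) (y :: ys) ↔ r x y ∧ (r y x → LexLe r xs ys) := by
  simp only [LexLe, length_cons, Nat.add_le_add_iff_right, Nat.forall_lt_succ_left,
    getD_cons_zero, getD_cons_succ]
  constructor
  · rintro (⟨hl, ⟨hxy, -⟩, hties⟩ | ⟨_ | s, hs, hs', hties, hlt, hnlt⟩)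
    · exact ⟨hxy, fun _ => Or.inl ⟨hl, hties⟩⟩
    · exact ⟨hlt, fun h => absurd h hnlt⟩
    · obtain ⟨⟨hxy, -⟩, hties⟩ := Nat.forall_lt_succ_left.1 hties
      exact ⟨hxy, fun _ => Or.inr ⟨s, by omega, by omega, hties, hlt, hnlt⟩⟩
  · rintro ⟨hxy, hrest⟩
    by_cases hyx : r y x
    · rcases hrest hyx with ⟨hl, hties⟩ | ⟨s, hs, hs', hties, hlt, hnlt⟩
      · exact Or.inl ⟨hl, ⟨hxy, hyx⟩, hties⟩
      · exact Or.inr ⟨s + 1, by omega, by omega,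
          Nat.forall_lt_succ_left.2 ⟨⟨hxy, hyx⟩, hties⟩, hlt, hnlt⟩
    · exact Or.inr ⟨0, by omega, by omega, by simp, hxy, hyx⟩

lemma lexLe_singleton_singleton : LexLe r [x] [y] ↔ r x y := by
  simp [lexLe_cons_cons]

lemma lexLe_congr (h : ∀ x ∈ xs, ∀ y ∈ ys, (r x y ↔ r' x y) ∧ (r y x ↔ r' y x)) :
    LexLe r xs ys ↔ LexLe r' xs ys := by
  induction xs generalizing ys with
  | nil => simp
  | cons x xs ih =>
    cases ys with
    | nil => simp
    | cons y ys =>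
      obtain ⟨hxy, hyx⟩ := h x mem_cons_self y mem_cons_self
      rw [lexLe_cons_cons, lexLe_cons_cons, hxy, hyx,
        ih fun a ha b hb => h a (mem_cons_of_mem x ha) b (mem_cons_of_mem y hb)]

lemma lexLe_total (h : ∀ x ∈ xs, ∀ y ∈ ys, r x y ∨ r y x) :
    LexLe r xs ys ∨ LexLe r ys xs := by
  induction xs generalizing ys with
  | nil => simp
  | cons x xs ih =>
    cases ys with
    | nil => simp
    | cons y ys =>
      simp only [lexLe_cons_cons]
      by_cases hxy : r x y <;> by_cases hyx : r y x
      · rcases ih fun a ha b hb => h a (mem_cons_of_mem x ha) b (mem_cons_of_mem y hb)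
          with hl | hl
        · exact Or.inl ⟨hxy, fun _ => hl⟩
        · exact Or.inr ⟨hyx, fun _ => hl⟩
      · exact Or.inl ⟨hxy, fun h => absurd h hyx⟩
      · exact Or.inr ⟨hyx, fun h => absurd h hxy⟩
      · exact absurd (h x mem_cons_self y mem_cons_self) (by tauto)

lemma lexLe_trans {s : Set Word} (hs : ∀ a ∈ s, ∀ b ∈ s, ∀ c ∈ s, r a b → r b c → r a c)
    (hxs : ∀ x ∈ xs, x ∈ s) (hys : ∀ y ∈ ys, y ∈ s) (hzs : ∀ z ∈ zs, z ∈ s) :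
    LexLe r xs ys → LexLe r ys zs → LexLe r xs zs := by
  induction xs generalizing ys zs with
  | nil => simp
  | cons x xs ih =>
    rcases ys with _ | ⟨y, ys⟩
    · simp
    rcases zs with _ | ⟨z, zs⟩
    · simp
    simp only [forall_mem_cons] at hxs hys hzs
    simp only [lexLe_cons_cons]
    rintro ⟨hxy, hxs'⟩ ⟨hyz, hys'⟩
    refine ⟨hs x hxs.1 y hys.1 z hzs.1 hxy hyz, fun hzx => ?_⟩
    have hzy := hs z hzs.1 x hxs.1 y hys.1 hzx hxy
    have hyx := hs y hys.1 z hzs.1 x hxs.1 hyz hzx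
    exact ih hxs.2 hys.2 hzs.2 (hxs' hyx) (hys' hzy)

end LexLe

lemma IsTotalPreorderOn.lexLe {r : Word → Word → Prop} {s : Set Word}
    (hr : IsTotalPreorderOn r s) : IsTotalPreorderOn (LexLe r) {N | ∀ x ∈ N, x ∈ s} where
  total _ hxs _ hys := lexLe_total fun x hx y hy => hr.total x (hxs x hx) y (hys y hy)
  trans _ hxs _ hys _ hzs := lexLe_trans hr.trans hxs hys hzs

section IsLexMax

variable {r r' : Word → Word → Prop} {x : Word} {l M : List Word}

lemma isLexMax_singleton_iff (hx : r x x) : IsLexMax r [x] M ↔ M = [x] := by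
  constructor
  · rintro ⟨hsub, hmax⟩
    rcases sublist_singleton.1 hsub with rfl | rfl
    · exact absurd (hmax [x] (Sublist.refl _)) not_lexLe_cons_nil
    · rfl
  · rintro rfl
    refine ⟨Sublist.refl _, fun N hN => ?_⟩
    rcases sublist_singleton.1 hN with rfl | rfl
    · exact lexLe_nil_left _
    · exact lexLe_singleton_singleton.2 hx

lemma IsLexMax.forall_mem {s : Set Word} (hM : IsLexMax r l M) (hl : ∀ x ∈ l, x ∈ s) :
    ∀ x ∈ M, x ∈ s :=
  fun x hx => hl x (hM.1.subset hx)

lemma isLexMax_congr (h : ∀ x ∈ l, ∀ y ∈ l, r x y ↔ r' x y) :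
    IsLexMax r l M ↔ IsLexMax r' l M := by
  refine and_congr_right fun hM => forall_congr' fun N => imp_congr_right fun hN => ?_
  exact lexLe_congr fun x hx y hy =>
    ⟨h x (hN.subset hx) y (hM.subset hy), h y (hM.subset hy) x (hN.subset hx)⟩

lemma exists_isLexMax {s : Set Word} (hr : IsTotalPreorderOn r s) (hl : ∀ x ∈ l, x ∈ s) :
    ∃ M, IsLexMax r l M := by
  obtain ⟨M, hM, hMtop⟩ := hr.lexLe.exists_top
    (l := l.sublists) (fun N hN x hx => hl x ((mem_sublists.1 hN).subset hx))
    (ne_nil_of_mem (mem_sublists.2 (nil_sublist l)))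
  exact ⟨M, mem_sublists.1 hM, fun N hN => hMtop N (mem_sublists.2 hN)⟩

lemma IsLexMax.cons (hM : IsLexMax r l M) (hx : r x x) (htop : ∀ y ∈ l, r y x) :
    IsLexMax r (x :: l) (x :: M) := by
  refine ⟨hM.1.cons_cons x, fun N hN => ?_⟩
  rcases sublist_cons_iff.1 hN with hN | ⟨N', rfl, hN'⟩
  · rcases N with _ | ⟨y, N'⟩
    · exact lexLe_nil_left _
    · exact lexLe_cons_cons.2 ⟨htop y (hN.subset mem_cons_self),
        fun _ => hM.2 N' (sublist_of_cons_sublist hN)⟩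
  · exact lexLe_cons_cons.2 ⟨hx, fun _ => hM.2 N' hN'⟩

lemma isLexMax_append_singleton {L : Word} (hL : r L L)
    (hlt : ∀ y ∈ l, r y L ∧ ¬ r L y) : IsLexMax r (l ++ [L]) [L] := by
  refine ⟨singleton_sublist.2 (mem_append_right l (mem_singleton_self L)), fun N hN => ?_⟩
  obtain ⟨N₁, N₂, rfl, hN₁, hN₂⟩ := sublist_append_iff.1 hN
  rcases N₁ with _ | ⟨y, N₁⟩
  · rcases sublist_singleton.1 hN₂ with rfl | rfl
    · exact lexLe_nil_left _
    · exact lexLe_singleton_singleton.2 hL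
  · obtain ⟨hyL, hLy⟩ := hlt y (hN₁.subset mem_cons_self)
    exact lexLe_cons_cons.2 ⟨hyL, fun h => absurd h hLy⟩

end IsLexMax

def LexMaxLe (r : Word → Word → Prop) (P Q : List Word) : Prop :=
  ∀ MP MQ, IsLexMax r P MP → IsLexMax r Q MQ → LexLe r MP MQ

section LexMaxLe

variable {r r' : Word → Word → Prop} {s : Set Word} {P Q R : List Word}

lemma lexMaxLe_congr (h : ∀ x ∈ P ++ Q, ∀ y ∈ P ++ Q, r x y ↔ r' x y) :
    LexMaxLe r P Q ↔ LexMaxLe r' P Q := by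
  have hP : ∀ x ∈ P, ∀ y ∈ P, r x y ↔ r' x y := fun x hx y hy =>
    h x (mem_append_left Q hx) y (mem_append_left Q hy)
  have hQ : ∀ x ∈ Q, ∀ y ∈ Q, r x y ↔ r' x y := fun x hx y hy =>
    h x (mem_append_right P hx) y (mem_append_right P hy)
  refine forall₂_congr fun MP MQ => ?_
  rw [isLexMax_congr hP, isLexMax_congr hQ]
  refine imp_congr_right fun hMP => imp_congr_right fun hMQ => lexLe_congr fun x hx y hy => ?_
  have hx' := mem_append_left Q (hMP.1.subset hx)
  have hy' := mem_append_right P (hMQ.1.subset hy)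
  exact ⟨h x hx' y hy', h y hy' x hx'⟩

lemma lexMaxLe_iff_lexLe (hr : IsTotalPreorderOn r s) (hP : ∀ x ∈ P, x ∈ s)
    (hQ : ∀ x ∈ Q, x ∈ s) {MP MQ : List Word} (hMP : IsLexMax r P MP) (hMQ : IsLexMax r Q MQ) :
    LexMaxLe r P Q ↔ LexLe r MP MQ := by
  refine ⟨fun h => h MP MQ hMP hMQ, fun h MP' MQ' hMP' hMQ' => ?_⟩
  have hsP := hMP.forall_mem hP
  have hsQ := hMQ.forall_mem hQ
  have hsQ' := hMQ'.forall_mem hQ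
  exact hr.lexLe.trans _ (hMP'.forall_mem hP) _ hsP _ hsQ' (hMP.2 MP' hMP'.1)
    (hr.lexLe.trans _ hsP _ hsQ _ hsQ' h (hMQ'.2 MQ hMQ.1))

lemma lexMaxLe_total (hr : IsTotalPreorderOn r s) (hP : ∀ x ∈ P, x ∈ s)
    (hQ : ∀ x ∈ Q, x ∈ s) : LexMaxLe r P Q ∨ LexMaxLe r Q P := by
  obtain ⟨MP, hMP⟩ := exists_isLexMax hr hP
  obtain ⟨MQ, hMQ⟩ := exists_isLexMax hr hQ
  rw [lexMaxLe_iff_lexLe hr hP hQ hMP hMQ, lexMaxLe_iff_lexLe hr hQ hP hMQ hMP]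
  exact hr.lexLe.total _ (hMP.forall_mem hP) _ (hMQ.forall_mem hQ)

lemma lexMaxLe_trans (hr : IsTotalPreorderOn r s) (hP : ∀ x ∈ P, x ∈ s)
    (hQ : ∀ x ∈ Q, x ∈ s) (hR : ∀ x ∈ R, x ∈ s) :
    LexMaxLe r P Q → LexMaxLe r Q R → LexMaxLe r P R := by
  obtain ⟨MP, hMP⟩ := exists_isLexMax hr hP
  obtain ⟨MQ, hMQ⟩ := exists_isLexMax hr hQ
  obtain ⟨MR, hMR⟩ := exists_isLexMax hr hR
  rw [lexMaxLe_iff_lexLe hr hP hQ hMP hMQ, lexMaxLe_iff_lexLe hr hQ hR hMQ hMR,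
    lexMaxLe_iff_lexLe hr hP hR hMP hMR]
  exact hr.lexLe.trans _ (hMP.forall_mem hP) _ (hMQ.forall_mem hQ) _ (hMR.forall_mem hR)

end LexMaxLe

section SplitOn

lemma flatten_splitOn (m : ℕ) (A : Word) : (A.splitOn m).flatten = A.filter (· != m) := by
  induction h : A.length using Nat.strong_induction_on generalizing A with
  | _ n ih =>
  by_cases hm : m ∈ A
  · obtain ⟨s, t, rfl⟩ := append_of_mem hm
    simp only [length_append, length_cons] at h
    rw [splitOn_append_cons_self, flatten_append, ih _ (by omega) s rfl, ih _ (by omega) t rfl]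
    simp [filter_append]
  · rw [splitOn_eq_singleton hm, flatten_singleton, eq_comm, filter_eq_self]
    intro c hc
    simpa using ne_of_mem_of_not_mem hc hm

lemma flatten_flatMap_splitOn (m : ℕ) (l : List Word) :
    (l.flatMap (·.splitOn m)).flatten = l.flatten.filter (· != m) := by
  induction l with
  | nil => rfl
  | cons A l ih => simp [flatten_splitOn, ih, filter_append]

lemma length_flatten_flatMap_splitOn_lt {m : ℕ} {l : List Word} (hm : m ∈ l.flatten) :
    (l.flatMap (·.splitOn m)).flatten.length < l.flatten.length := by
  rw [flatten_flatMap_splitOn]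
  exact length_filter_lt_length_iff_exists.2 ⟨m, hm, by simp⟩

lemma length_add_length_le_length_flatten {α : Type*} {L : List (List α)} {x y : List α}
    (hx : x ∈ L) (hy : y ∈ L) (hxy : x ≠ y) : x.length + y.length ≤ L.flatten.length := by
  obtain ⟨s, t, rfl⟩ := append_of_mem hx
  have hy' : y ∈ s ++ t := by simpa [Ne.symm hxy] using hy
  have := (sublist_flatten_of_mem hy').length_le
  simp only [flatten_append, length_append, flatten_cons] at this ⊢
  omega

end SplitOn

def WleStep (A B : Word) : Prop :=
  (A = [] ∧ B = []) ∨ ∀ m, (A ++ B).min? = some m → LexMaxLe Wle (A.splitOn m) (B.splitOn m)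

lemma leAux_succ_self (f : ℕ) (A : Word) : leAux (f + 1) A A :=
  Or.inr fun _ _ _ _ hA hB => hB.2 _ hA.1

lemma wle_refl (A : Word) : Wle A A := leAux_succ_self _ A

/-- Any fuel beyond `|A| + |B|` computes `≾`: two distinct blocks of `A` and `B` are together
shorter than `A ++ B`, and a block compared with itself is related under any positive fuel. -/
lemma leAux_succ_iff {f : ℕ} {A B : Word} (h : A.length + B.length ≤ f) :
    leAux (f + 1) A B ↔ WleStep A B := by
  induction hn : A.length + B.length using Nat.strong_induction_on generalizing f A B with
  | _ n ih =>
  unfold leAux WleStep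
  refine or_congr_right (forall₂_congr fun m hm => lexMaxLe_congr fun x hx y hy => ?_)
  have hmAB : m ∈ [A, B].flatten := by simpa using min?_mem hm
  have hpieces : A.splitOn m ++ B.splitOn m = [A, B].flatMap (·.splitOn m) := by simp
  rw [hpieces] at hx hy
  obtain ⟨f, rfl⟩ : ∃ f', f = f' + 1 :=
    Nat.exists_eq_add_one.2 ((length_pos_of_mem hmAB).trans_le (by simpa using h))
  by_cases hxy : x = y
  · subst hxy
    exact iff_of_true (leAux_succ_self f x) (wle_refl x)
  have hlt : x.length + y.length < n :=
    (length_add_length_le_length_flatten hx hy hxy).trans_lt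
      (by simpa [← hn] using length_flatten_flatMap_splitOn_lt hmAB)
  exact (ih _ hlt (by omega) rfl).trans (ih _ hlt le_rfl rfl).symm

lemma wle_iff_wleStep {A B : Word} : Wle A B ↔ WleStep A B := leAux_succ_iff le_rfl

/-- If `m` does not occur, both words are single blocks, and comparing `[A]` with `[B]` is
`A ≾ B` itself. -/
lemma wle_iff_lexMaxLe {A B : Word} {m : ℕ} (hm : ∀ c ∈ A ++ B, m ≤ c) :
    Wle A B ↔ LexMaxLe Wle (A.splitOn m) (B.splitOn m) := by
  by_cases hmem : m ∈ A ++ B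
  · have hmin : (A ++ B).min? = some m := min?_eq_some_iff.2 ⟨hmem, hm⟩
    have hne : ¬ (A = [] ∧ B = []) := by rintro ⟨rfl, rfl⟩; simp at hmem
    simp [wle_iff_wleStep, WleStep, hmin, hne]
  · rw [mem_append, not_or] at hmem
    rw [splitOn_eq_singleton hmem.1, splitOn_eq_singleton hmem.2]
    simp [LexMaxLe, isLexMax_singleton_iff (wle_refl _), lexLe_singleton_singleton]

lemma isTotalPreorderOn_wle (l : List Word) : IsTotalPreorderOn Wle {w | w ∈ l} := by
  induction hn : l.flatten.length using Nat.strong_induction_on generalizing l with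
  | _ n ih =>
  rcases hmin : l.flatten.min? with _ | m
  · have hnil : ∀ w ∈ l, w = [] := flatten_eq_nil_iff.1 (min?_eq_none_iff.1 hmin)
    have hle : ∀ x ∈ l, ∀ y ∈ l, Wle x y := fun x hx y hy => by
      rw [hnil x hx, hnil y hy]; exact wle_refl []
    exact ⟨fun x hx y hy => Or.inl (hle x hx y hy), fun x hx _ _ z hz _ _ => hle x hx z hz⟩
  obtain ⟨hm, hmle⟩ := min?_eq_some_iff.1 hmin
  have hr := ih _ (hn ▸ length_flatten_flatMap_splitOn_lt hm) _ rfl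
  have hblocks : ∀ x ∈ l, ∀ w ∈ x.splitOn m, w ∈ {w | w ∈ l.flatMap (·.splitOn m)} :=
    fun x hx w hw => mem_flatMap.2 ⟨x, hx, hw⟩
  have hcut : ∀ x ∈ l, ∀ y ∈ l, Wle x y ↔ LexMaxLe Wle (x.splitOn m) (y.splitOn m) :=
    fun x hx y hy => wle_iff_lexMaxLe fun c hc => hmle c <| by
      rcases mem_append.1 hc with hc | hc
      exacts [mem_flatten_of_mem hx hc, mem_flatten_of_mem hy hc]
  refine ⟨fun x hx y hy => ?_, fun x hx y hy z hz => ?_⟩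
  · rw [hcut x hx y hy, hcut y hy x hx]
    exact lexMaxLe_total hr (hblocks x hx) (hblocks y hy)
  · rw [hcut x hx y hy, hcut y hy z hz, hcut x hx z hz]
    exact lexMaxLe_trans hr (hblocks x hx) (hblocks y hy) (hblocks z hz)

instance : Std.Total Wle :=
  ⟨fun A B => (isTotalPreorderOn_wle [A, B]).total A (by simp) B (by simp)⟩

instance : IsTrans Word Wle :=
  ⟨fun A B C => (isTotalPreorderOn_wle [A, B, C]).trans A (by simp) B (by simp) C (by simp)⟩

theorem exists_isLexMax_append_singleton {r : Word → Word → Prop} [Std.Total r] [IsTrans Word r]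
    {l : List Word} (hl : l.Pairwise fun x y => r y x) (L : Word) :
    ∃ k ≤ l.length, IsLexMax r (l ++ [L]) (l.take k ++ [L]) ∧
      (∀ i < k, r L (l.getD i [])) ∧
      ∀ i, k ≤ i → i < l.length → r (l.getD i []) L ∧ ¬ r L (l.getD i []) := by
  induction l with
  | nil => exact ⟨0, le_rfl, (isLexMax_singleton_iff (refl_of r L)).2 rfl, by simp, by simp⟩
  | cons x t ih =>
    obtain ⟨hxt, ht⟩ := pairwise_cons.1 hl
    by_cases hLx : r L x
    · obtain ⟨k, hk, hM, hle, hlt⟩ := ih ht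
      refine ⟨k + 1, by simpa using hk, ?_, ?_, ?_⟩
      · refine hM.cons (refl_of r x) fun y hy => ?_
        rcases mem_append.1 hy with hy | hy
        exacts [hxt y hy, (mem_singleton.1 hy) ▸ hLx]
      · rintro (_ | i) hi
        exacts [hLx, hle i (by omega)]
      · rintro (_ | i) hki hi
        · omega
        · exact hlt i (by omega) (by simpa using hi)
    · have hxL : r x L := (total_of r x L).resolve_right hLx
      have hlt : ∀ y ∈ x :: t, r y L ∧ ¬ r L y := by
        refine forall_mem_cons.2 ⟨⟨hxL, hLx⟩, fun y hy => ?_⟩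
        exact ⟨_root_.trans (hxt y hy) hxL, fun hLy => hLx (_root_.trans hLy (hxt y hy))⟩
      refine ⟨0, Nat.zero_le _, isLexMax_append_singleton (refl_of r L) hlt, by simp,
        fun i _ hi => hlt _ ?_⟩
      rw [getD_eq_getElem _ _ hi]
      exact getElem_mem hi

lemma pairwise_of_inNF_intercalate {As : List Word} (hS1 : ∀ w ∈ As, ∀ c ∈ w, 1 ≤ c)
    (hnf : InNF ([0].intercalate As)) : As.Pairwise fun x y => Wle y x := by
  match As, hS1, hnf with
  | [], _, _ | [_], _, _ => simp
  | A :: B :: t, hS1, hnf =>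
    set W := [0].intercalate (A :: B :: t) with hW
    have h0 : (0 : ℕ) ∈ W := by simp [hW, intercalate_cons_cons]
    have hmin : W.min? = some 0 := min?_eq_some_iff.2 ⟨h0, fun c _ => Nat.zero_le c⟩
    have hsplit : W.splitOn 0 = A :: B :: t :=
      splitOn_intercalate 0 (fun w hw h => by simpa using hS1 w hw 0 h) (cons_ne_nil _ _)
    obtain ⟨g, hg⟩ := Nat.exists_eq_add_one.2 (length_pos_of_mem h0)
    rw [InNF, hg, NFAux] at hnf
    have hchain := ((hnf.resolve_left (ne_nil_of_mem h0)) 0 hmin).1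
    rw [hsplit] at hchain
    exact hchain.pairwise

theorem lexmax_of_append_two_general (As : List Word)
    (hS1 : ∀ w ∈ As, ∀ c ∈ w, 1 ≤ c)
    (hnf : InNF (List.intercalate [0] As)) :
    ∃ k ≤ As.length - 1,
      IsLexMax Wle (As.dropLast ++ [As.getLastD [] ++ [2]])
        (As.take k ++ [As.getLastD [] ++ [2]]) ∧
      (∀ i < k, Wle (As.getLastD [] ++ [2]) (As.getD i [])) ∧
      (∀ i, k ≤ i → i < As.length - 1 →
        Wlt (As.getD i []) (As.getLastD [] ++ [2])) := by
  obtain ⟨k, hk, hM, hle, hlt⟩ := exists_isLexMax_append_singleton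
    ((pairwise_of_inNF_intercalate hS1 hnf).sublist (dropLast_sublist As)) (As.getLastD [] ++ [2])
  rw [length_dropLast] at hk hlt
  have hget : ∀ i < As.length - 1, As.dropLast.getD i [] = As.getD i [] := fun i hi => by
    rw [getD_eq_getElem _ _ (by simpa using hi), getD_eq_getElem _ _ (by omega), getElem_dropLast]
  have htake : As.dropLast.take k = As.take k := by
    rw [dropLast_eq_take, take_take, min_eq_left hk]
  refine ⟨k, hk, htake ▸ hM, fun i hi => hget i (by omega) ▸ hle i hi,
    fun i hki hi => hget i hi ▸ hlt i hki hi⟩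

theorem lexmax_of_append_two (As : List Word) (hne : As ≠ [])
    (hS1 : ∀ w ∈ As, ∀ c ∈ w, 1 ≤ c)
    (hnf : InNF (List.intercalate [0] As)) :
    ∃ k ≤ As.length - 1,
      IsLexMax Wle (As.dropLast ++ [As.getLastD [] ++ [2]])
        (As.take k ++ [As.getLastD [] ++ [2]]) ∧
      (∀ i < k, Wle (As.getLastD [] ++ [2]) (As.getD i [])) ∧
      (∀ i, k ≤ i → i < As.length - 1 →
        Wlt (As.getD i []) (As.getLastD [] ++ [2])) :=
  lexmax_of_append_two_general As hS1 hnf
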